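/- arXiv:1506.00380 — 2 statements merged into one kernel-verified Lean document; each statement's English description precedes it below -/
import Mathlib

section
/- Let {α_i}_{i=1}^n be elements of a convex set C and {a_i} linear functionals with values in [0,1] on C such that a_i(α_j) = 0 for all j > i, and a_i(α_i) = 1 for all i. Then the states {α_i} are perfectly distinguishable by a sequential protocol: there exist functionals {b_i}_{i=1}^n, each b_i of the form a_i · Π_{k<i}(1 - a_k), with b_i(α_j) = δ_{ij}. -/
theorem stmt_12 {V : Type*} [AddCommGroup V] [Module ℝ V] {n : ℕ}
    (C : Set V) (hC : Convex ℝ C)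
    (α : Fin n → V) (hα : ∀ i, α i ∈ C)
    (a : Fin n → (V →ₗ[ℝ] ℝ))
    (h01 : ∀ i, ∀ v ∈ C, 0 ≤ a i v ∧ a i v ≤ 1)
    (htri : ∀ i j, i < j → a i (α j) = 0)
    (hdiag : ∀ i, a i (α i) = 1) :
    ∃ b : Fin n → V → ℝ,
      (∀ i, b i = fun v => a i v * ∏ k ∈ Finset.univ.filter (fun k => k < i), (1 - a k v)) ∧
      (∀ i j, b i (α j) = if i = j then 1 else 0) := by
  refine ⟨fun i v => a i v * ∏ k ∈ Finset.univ.filter (fun k => k < i), (1 - a k v),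
    fun i => rfl, fun i j => ?_⟩
  rcases lt_trichotomy i j with h | h | h
  · simp [htri i j h, Fin.ne_of_lt h]
  · subst h
    beta_reduce
    rw [if_pos rfl, hdiag i]
    rw [Finset.prod_eq_one fun k hk => ?_, mul_one]
    simp only [Finset.mem_filter] at hk
    rw [htri k i hk.2]; ring
  · beta_reduce
    rw [if_neg (Fin.ne_of_gt h)]
    rw [Finset.prod_eq_zero (i := j) (by simp [h]) (by rw [hdiag j]; ring), mul_zero]
end

section
/- Let p, q ∈ R^d be probability vectors with p majorized by q, and let {ψ_i}, {φ_j} be elements of a convex set C such that for every permutation π there exists an affine map U_π : C → C with U_π(φ_j) = ψ_{π(j)} for all j. Then Σ_i p_i ψ_i = Σ_k λ_k U_{π_k}(Σ_j q_j φ_j) for some probability distribution {λ_k} and permutations π_k; i.e., Σ_i p_i ψ_i is a convex mixture of affine images of Σ_j q_j φ_j. -/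
def MajorizedBy {d : ℕ} (x y : Fin d → ℝ) : Prop :=
  ∃ σ τ : Equiv.Perm (Fin d), Antitone (x ∘ σ) ∧ Antitone (y ∘ τ) ∧
    (∀ k : ℕ, k < d →
      ∑ i ∈ Finset.univ.filter (fun i : Fin d => (i : ℕ) < k), x (σ i) ≤
      ∑ i ∈ Finset.univ.filter (fun i : Fin d => (i : ℕ) < k), y (τ i)) ∧
    ∑ i, x i = ∑ i, y i
/-! By the separation theorem, `p` lies in the convex hull of the rearrangements `q ∘ π` as soon
as every linear functional `c` satisfies `∑ pᵢ cᵢ ≤ max_π ∑ q_{π i} cᵢ`. Sorting `c` decreasingly,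
the rearrangement inequality followed by summation by parts against the prefix-sum inequalities of
majorization gives exactly this. Applying `x ↦ ∑ xᵢ • ψᵢ` to `p = ∑ λ_π • (q ∘ π)` then writes
`∑ pᵢ • ψᵢ` as a mixture of the vectors `∑ q_{π i} • ψᵢ = U π⁻¹ (∑ qⱼ • φⱼ)`, the last equality
because affine maps preserve combinations whose weights sum to one. -/

open Finset

theorem sum_range_mul_nonneg_of_partial_sums_nonneg {d : ℕ} {a z : ℕ → ℝ}
    (ha : ∀ i, i + 1 < d → a (i + 1) ≤ a i)
    (hz : ∀ k < d, 0 ≤ ∑ i ∈ range k, z i) (hzd : ∑ i ∈ range d, z i = 0) :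
    0 ≤ ∑ i ∈ range d, a i * z i := by
  have h := sum_range_by_parts a z d
  simp only [smul_eq_mul, hzd, mul_zero, zero_sub] at h
  rw [h, neg_nonneg]
  refine sum_nonpos fun i hi => mul_nonpos_of_nonpos_of_nonneg ?_ (hz _ ?_)
  · linarith [ha i (by rw [mem_range] at hi; omega)]
  · rw [mem_range] at hi; omega

theorem Fin.sum_filter_val_lt_eq_sum_range {M : Type*} [AddCommMonoid M] {d k : ℕ} (hk : k ≤ d)
    (f : Fin d → M) :
    ∑ i ∈ univ.filter (fun i : Fin d => (i : ℕ) < k), f i =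
      ∑ n ∈ range k, if h : n < d then f ⟨n, h⟩ else 0 := by
  calc _ = ∑ n ∈ (univ.filter fun i : Fin d => (i : ℕ) < k).map Fin.valEmbedding,
        if h : n < d then f ⟨n, h⟩ else 0 := by simp
    _ = _ := by
      congr 1
      ext n
      simp only [mem_map, mem_filter, mem_univ, true_and, mem_range]
      exact ⟨fun ⟨i, hi, hin⟩ => hin ▸ hi, fun hn => ⟨⟨n, by omega⟩, hn, rfl⟩⟩

theorem Antitone.sum_mul_le_sum_mul_of_prefix_sums_le {d : ℕ} {a x y : Fin d → ℝ}
    (ha : Antitone a)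
    (hpre : ∀ k < d, ∑ i ∈ univ.filter (fun i : Fin d => (i : ℕ) < k), x i ≤
      ∑ i ∈ univ.filter (fun i : Fin d => (i : ℕ) < k), y i)
    (hsum : ∑ i, x i = ∑ i, y i) :
    ∑ i, a i * x i ≤ ∑ i, a i * y i := by
  let zeroExt : (Fin d → ℝ) → ℕ → ℝ := fun f n => if h : n < d then f ⟨n, h⟩ else 0
  have sum_eq : ∀ f, ∑ i, f i = ∑ n ∈ range d, zeroExt f n := fun f => by
    simpa using Fin.sum_filter_val_lt_eq_sum_range le_rfl f
  rw [← sub_nonneg, ← sum_sub_distrib]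
  calc (0 : ℝ) ≤ ∑ n ∈ range d, zeroExt a n * zeroExt (y - x) n := by
        refine sum_range_mul_nonneg_of_partial_sums_nonneg (fun i hi => ?_) (fun k hk => ?_) ?_
        · simp only [zeroExt, dif_pos hi, dif_pos (Nat.lt_of_succ_lt hi)]
          exact ha (Fin.mk_le_mk.2 i.le_succ)
        · rw [← Fin.sum_filter_val_lt_eq_sum_range hk.le, Pi.sub_def, sum_sub_distrib, sub_nonneg]
          exact hpre k hk
        · rw [← sum_eq, Pi.sub_def, sum_sub_distrib, hsum, sub_self]
    _ = ∑ i, (a i * y i - a i * x i) := by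
        rw [sum_eq]
        refine sum_congr rfl fun n _ => ?_
        simp only [zeroExt]; split_ifs <;> simp [mul_sub]

theorem MajorizedBy.exists_perm_sum_mul_le {d : ℕ} {p q : Fin d → ℝ} (h : MajorizedBy p q)
    (c : Fin d → ℝ) : ∃ π : Equiv.Perm (Fin d), ∑ i, p i * c i ≤ ∑ i, q (π i) * c i := by
  obtain ⟨σ, τ, hpσ, hqτ, hpre, hsum⟩ := h
  let ρ := Tuple.sort (fun i => -c i)
  have hcρ : Antitone (c ∘ ρ) := fun i j hij => by
    simpa using Tuple.monotone_sort (fun i => -c i) hij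
  refine ⟨ρ.symm.trans τ, ?_⟩
  calc ∑ i, p i * c i = ∑ i, (c ∘ ρ) i * (p ∘ σ) ((ρ.trans σ.symm) i) := by
        rw [← Equiv.sum_comp ρ]; simp [mul_comm]
    _ ≤ ∑ i, (c ∘ ρ) i * (p ∘ σ) i := (hcρ.monovary hpσ).sum_mul_comp_perm_le_sum_mul
    _ ≤ ∑ i, (c ∘ ρ) i * (q ∘ τ) i :=
        hcρ.sum_mul_le_sum_mul_of_prefix_sums_le hpre (by simp [σ.sum_comp, τ.sum_comp, hsum])
    _ = ∑ i, q ((ρ.symm.trans τ) i) * c i := by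
        rw [← Equiv.sum_comp ρ (fun i => q ((ρ.symm.trans τ) i) * c i)]; simp [mul_comm]

theorem mem_convexHull_of_forall_exists_le {E : Type*} [TopologicalSpace E] [AddCommGroup E]
    [IsTopologicalAddGroup E] [Module ℝ E] [ContinuousSMul ℝ E] [LocallyConvexSpace ℝ E]
    [T2Space E] {s : Set E} (hs : s.Finite) {x : E}
    (h : ∀ f : StrongDual ℝ E, ∃ y ∈ s, f x ≤ f y) : x ∈ convexHull ℝ s := by
  by_contra hx
  obtain ⟨f, u, hfs, hux⟩ := geometric_hahn_banach_closed_point (convex_convexHull ℝ s)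
    (hs.isCompact_convexHull (𝕜 := ℝ)).isClosed hx
  obtain ⟨y, hy, hxy⟩ := h f
  linarith [hfs y (subset_convexHull ℝ s hy)]

theorem MajorizedBy.mem_convexHull {d : ℕ} {p q : Fin d → ℝ} (h : MajorizedBy p q) :
    p ∈ convexHull ℝ (Set.range fun π : Equiv.Perm (Fin d) => q ∘ π) := by
  refine mem_convexHull_of_forall_exists_le (Set.finite_range _) fun f => ?_
  obtain ⟨π, hπ⟩ := h.exists_perm_sum_mul_le fun i => f fun j => if i = j then 1 else 0
  have hf := LinearMap.pi_apply_eq_sum_univ (f : (Fin d → ℝ) →ₗ[ℝ] ℝ)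
  simp only [ContinuousLinearMap.coe_coe, smul_eq_mul] at hf
  exact ⟨q ∘ π, ⟨π, rfl⟩, by rwa [hf p, hf (q ∘ π)]⟩

theorem AffineMap.map_sum_smul_of_sum_eq_one {R V W ι : Type*} [Ring R] [AddCommGroup V]
    [Module R V] [AddCommGroup W] [Module R W] (f : V →ᵃ[R] W) {s : Finset ι} {w : ι → R}
    (hw : ∑ i ∈ s, w i = 1) (v : ι → V) :
    f (∑ i ∈ s, w i • v i) = ∑ i ∈ s, w i • f (v i) := by
  rw [← s.affineCombination_eq_linear_combination v w hw, s.map_affineCombination v w hw,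
    s.affineCombination_eq_linear_combination _ w hw]
  rfl

theorem exists_fin_sum_smul_eq_of_mem_convexHull_range {R E ι : Type*} [Field R] [LinearOrder R]
    [IsStrictOrderedRing R] [AddCommGroup E] [Module R E] {g : ι → E} {x : E}
    (hx : x ∈ convexHull R (Set.range g)) :
    ∃ (n : ℕ) (w : Fin n → R) (k : Fin n → ι),
      (∀ j, 0 ≤ w j) ∧ ∑ j, w j = 1 ∧ x = ∑ j, w j • g (k j) := by
  obtain ⟨κ, _, w, z, hw₀, hw₁, hz, rfl⟩ := mem_convexHull_iff_exists_fintype.1 hx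
  choose k hk using hz
  let e := (Fintype.equivFin κ).symm
  refine ⟨Fintype.card κ, w ∘ e, k ∘ e, fun j => hw₀ _, ?_, ?_⟩
  · simp only [Function.comp_apply, e.sum_comp w, hw₁]
  · rw [← e.sum_comp]
    simp [hk]

theorem stmt_13_general {V : Type*} [AddCommGroup V] [Module ℝ V] {d : ℕ}
    (p q : Fin d → ℝ)
    (hq1 : ∑ i, q i = 1)
    (hmaj : MajorizedBy p q)
    (ψ φ : Fin d → V)
    (U : Equiv.Perm (Fin d) → (V →ᵃ[ℝ] V))
    (hU : ∀ (π : Equiv.Perm (Fin d)) (j : Fin d), U π (φ j) = ψ (π j)) :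
    ∃ (n : ℕ) (lam : Fin n → ℝ) (πs : Fin n → Equiv.Perm (Fin d)),
      (∀ k, 0 ≤ lam k) ∧ ∑ k, lam k = 1 ∧
      ∑ i, p i • ψ i = ∑ k, lam k • (U (πs k)) (∑ j, q j • φ j) := by
  have hUq : ∀ π, U π (∑ j, q j • φ j) = ∑ i, q (π.symm i) • ψ i := fun π => by
    rw [(U π).map_sum_smul_of_sum_eq_one hq1, ← Equiv.sum_comp π (fun i => q (π.symm i) • ψ i)]
    simp [hU]
  have hmem : ∑ i, p i • ψ i ∈ convexHull ℝ (Set.range fun π => U π (∑ j, q j • φ j)) := by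
    have hlin := Set.mem_image_of_mem (Fintype.linearCombination ℝ ψ) hmaj.mem_convexHull
    rw [LinearMap.image_convexHull, ← Set.range_comp] at hlin
    refine convexHull_mono ?_ hlin
    rintro _ ⟨π, rfl⟩
    exact ⟨π.symm, by simp [hUq, Fintype.linearCombination_apply]⟩
  exact exists_fin_sum_smul_eq_of_mem_convexHull_range hmem

theorem stmt_13 {V : Type*} [AddCommGroup V] [Module ℝ V] {d : ℕ}
    (p q : Fin d → ℝ)
    (hp0 : ∀ i, 0 ≤ p i) (hp1 : ∑ i, p i = 1)
    (hq0 : ∀ i, 0 ≤ q i) (hq1 : ∑ i, q i = 1)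
    (hmaj : MajorizedBy p q)
    (ψ φ : Fin d → V)
    (U : Equiv.Perm (Fin d) → (V →ᵃ[ℝ] V))
    (hU : ∀ (π : Equiv.Perm (Fin d)) (j : Fin d), U π (φ j) = ψ (π j)) :
    ∃ (n : ℕ) (lam : Fin n → ℝ) (πs : Fin n → Equiv.Perm (Fin d)),
      (∀ k, 0 ≤ lam k) ∧ ∑ k, lam k = 1 ∧
      ∑ i, p i • ψ i = ∑ k, lam k • (U (πs k)) (∑ j, q j • φ j) :=
  stmt_13_general p q hq1 hmaj ψ φ U hU
end
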